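/- arXiv:1904.05332 — 2 statements merged into one kernel-verified Lean document; each statement's English description precedes it below -/
import Mathlib

section
/- Let X be an n×K membership matrix with all cluster sizes s_k ≥ 1, Δ the K×K diagonal matrix with entries √s_k, and Θ any K×K real matrix. Then the characteristic polynomial of the n×n matrix X Θ Xᵀ equals t^{n−K} times the characteristic polynomial of the K×K matrix Δ Θ Δ. In particular, the nonzero eigenvalues (with multiplicity) of X Θ Xᵀ coincide with those of Δ Θ Δ. -/
/-!
Writing `X Θ Xᵀ = X (Θ Xᵀ)` and swapping the factors (which, for an `n × K` by `K × n` product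
with `K ≤ n`, multiplies the characteristic polynomial by `t^(n-K)`) leaves `Θ XᵀX = Θ Δ²`,
which has the same characteristic polynomial as `Δ Θ Δ`. Nonempty clusters give `K ≤ n`.
-/

open Matrix Polynomial

namespace Matrix

variable {R m k : Type*} [Fintype m]

theorem charpoly_mul_mul_transpose_of_le [CommRing R] [Fintype k] [DecidableEq m] [DecidableEq k]
    (A : Matrix m k R) (Θ Δ : Matrix k k R) (hΔ : Δ * Δ = Aᵀ * A)
    (hle : Fintype.card k ≤ Fintype.card m) :
    (A * Θ * Aᵀ).charpoly = X ^ (Fintype.card m - Fintype.card k) * (Δ * Θ * Δ).charpoly := by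
  have hswap : (Θ * Aᵀ) * A = (Θ * Δ) * Δ := by
    rw [Matrix.mul_assoc, ← hΔ, Matrix.mul_assoc]
  rw [Matrix.mul_assoc, charpoly_mul_comm_of_le _ _ hle, hswap, charpoly_mul_comm,
    Matrix.mul_assoc]

theorem transpose_mul_self_of_oneHot [NonAssocSemiring R] [DecidableEq k] (g : m → k) :
    let A : Matrix m k R := of fun i c => if g i = c then 1 else 0
    Aᵀ * A = diagonal fun c => ((Finset.univ.filter fun i => g i = c).card : R) := by
  ext c d
  simp only [mul_apply, transpose_apply, of_apply, ite_zero_mul_ite_zero, mul_one, diagonal_apply]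
  split_ifs with hcd
  · simp [hcd]
  · exact Finset.sum_eq_zero fun i _ => if_neg fun h => hcd (h.1.symm.trans h.2)

end Matrix

/-- The characteristic polynomial of `X Θ Xᵀ` equals `t^(n-K)` times the
characteristic polynomial of `Δ Θ Δ`, for a membership matrix `X` with all cluster sizes ≥ 1. -/
theorem membership_charpoly (n K : ℕ)
    (X : Matrix (Fin n) (Fin K) ℝ) (g : Fin n → Fin K)
    (hX : ∀ i k, X i k = if g i = k then 1 else 0)
    (s : Fin K → ℝ)
    (hs : ∀ k, s k = ((Finset.univ.filter (fun i => g i = k)).card : ℝ))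
    (hs1 : ∀ k, 1 ≤ s k)
    (Δ : Matrix (Fin K) (Fin K) ℝ)
    (hΔ : Δ = Matrix.diagonal (fun k => Real.sqrt (s k)))
    (Θ : Matrix (Fin K) (Fin K) ℝ) :
    (X * Θ * Xᵀ).charpoly = Polynomial.X ^ (n - K) * (Δ * Θ * Δ).charpoly := by
  have hsurj : Function.Surjective g := fun k => by
    have hpos : 0 < (Finset.univ.filter fun i => g i = k).card := by
      exact_mod_cast (hs k ▸ hs1 k : (1 : ℝ) ≤ _)
    obtain ⟨i, hi⟩ := Finset.card_pos.mp hpos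
    exact ⟨i, (Finset.mem_filter.mp hi).2⟩
  have hXX : Xᵀ * X = diagonal s := by
    rw [show X = of fun i c => if g i = c then 1 else 0 from ext hX,
      transpose_mul_self_of_oneHot, ← funext hs]
  have hΔΔ : Δ * Δ = Xᵀ * X := by
    rw [hΔ, hXX, diagonal_mul_diagonal]
    exact congrArg diagonal (funext fun k => Real.mul_self_sqrt (zero_le_one.trans (hs1 k)))
  simpa using charpoly_mul_mul_transpose_of_le X Θ Δ hΔΔ
    (by simpa using Fintype.card_le_of_surjective g hsurj)
end

section
/- Let (Ω, μ) be a probability space, X an n×K membership matrix with all cluster sizes s_k ≥ 2, Δ the diagonal matrix with entries √s_k, and Θ a K×K real matrix with P := X Θ Xᵀ. Let A : Ω → ℝ^{n×n} be a random matrix whose entries are integrable and satisfy E[A] = P − diag(P) entrywise. Define Ŝ(ω) := Δ⁻² Xᵀ A(ω) X Δ⁻² and Θ̂(ω) := Ŝ(ω) + Δ⁻² (I_K − Δ⁻²)⁻¹ diag(Ŝ(ω)). Then E[Θ̂] = Θ entrywise, i.e. Θ̂ is an unbiased estimator of the connectivity matrix Θ. -/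
open Matrix MeasureTheory

/-- Unbiasedness of the corrected block-probability estimator: if
`E[A] = P − diag(P)` entrywise with `P = X Θ Xᵀ`, `Ŝ = Δ⁻² Xᵀ A X Δ⁻²` and
`Θ̂ = Ŝ + Δ⁻² (I − Δ⁻²)⁻¹ diag(Ŝ)`, then `E[Θ̂] = Θ` entrywise. -/
theorem corrected_estimator_unbiased (n K : ℕ)
    (Ω : Type) [MeasurableSpace Ω] (μ : Measure Ω) [IsProbabilityMeasure μ]
    (X : Matrix (Fin n) (Fin K) ℝ) (g : Fin n → Fin K)
    (hX : ∀ i k, X i k = if g i = k then 1 else 0)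
    (s : Fin K → ℝ)
    (hs : ∀ k, s k = ((Finset.univ.filter (fun i => g i = k)).card : ℝ))
    (hs2 : ∀ k, 2 ≤ s k)
    (Δ : Matrix (Fin K) (Fin K) ℝ)
    (hΔ : Δ = Matrix.diagonal (fun k => Real.sqrt (s k)))
    (Θ : Matrix (Fin K) (Fin K) ℝ)
    (P : Matrix (Fin n) (Fin n) ℝ) (hP : P = X * Θ * Xᵀ)
    (A : Ω → Matrix (Fin n) (Fin n) ℝ)
    (hInt : ∀ i j, Integrable (fun ω => A ω i j) μ)
    (hmean : ∀ i j, ∫ ω, A ω i j ∂μ = (P - Matrix.diagonal P.diag) i j)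
    (Shat : Ω → Matrix (Fin K) (Fin K) ℝ)
    (hShat : ∀ ω, Shat ω = (Δ⁻¹ * Δ⁻¹) * Xᵀ * A ω * X * (Δ⁻¹ * Δ⁻¹))
    (Θhat : Ω → Matrix (Fin K) (Fin K) ℝ)
    (hΘhat : ∀ ω, Θhat ω = Shat ω + (Δ⁻¹ * Δ⁻¹) *
      ((1 : Matrix (Fin K) (Fin K) ℝ) - Δ⁻¹ * Δ⁻¹)⁻¹ * Matrix.diagonal (Shat ω).diag) :
    ∀ k l, ∫ ω, Θhat ω k l ∂μ = Θ k l := by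
  have hspos : ∀ k, (0:ℝ) < s k := fun k => lt_of_lt_of_le two_pos (hs2 k)
  have hsne : ∀ k, s k ≠ 0 := fun k => (hspos k).ne'
  -- Δ⁻¹ * Δ⁻¹ = diagonal (s⁻¹)
  have hΔinv : Δ⁻¹ = Matrix.diagonal (fun k => (Real.sqrt (s k))⁻¹) := by
    apply Matrix.inv_eq_right_inv
    rw [hΔ, Matrix.diagonal_mul_diagonal, ← Matrix.diagonal_one]
    refine congrArg Matrix.diagonal (funext fun k => ?_)
    exact mul_inv_cancel₀ (Real.sqrt_ne_zero'.mpr (hspos k))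
  have hD : Δ⁻¹ * Δ⁻¹ = Matrix.diagonal (fun k => (s k)⁻¹) := by
    rw [hΔinv, Matrix.diagonal_mul_diagonal]
    refine congrArg Matrix.diagonal (funext fun k => ?_)
    rw [← mul_inv, Real.mul_self_sqrt (hspos k).le]
  have hone : ∀ k, (1:ℝ) - (s k)⁻¹ ≠ 0 := by
    intro k
    have h1 : (s k)⁻¹ < 1 := by
      rw [inv_lt_one_iff₀]; right; linarith [hs2 k]
    linarith
  have hE : ((1 : Matrix (Fin K) (Fin K) ℝ) - Δ⁻¹ * Δ⁻¹)⁻¹ =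
      Matrix.diagonal (fun k => ((1:ℝ) - (s k)⁻¹)⁻¹) := by
    apply Matrix.inv_eq_right_inv
    have hsub : (1 : Matrix (Fin K) (Fin K) ℝ) - Matrix.diagonal (fun k => (s k)⁻¹) =
        Matrix.diagonal (fun k => (1:ℝ) - (s k)⁻¹) := by
      ext k m
      by_cases h : k = m
      · subst h; simp
      · simp [Matrix.one_apply_ne h, Matrix.diagonal_apply_ne _ h]
    rw [hD, hsub, Matrix.diagonal_mul_diagonal, ← Matrix.diagonal_one]
    refine congrArg Matrix.diagonal (funext fun k => ?_)
    exact mul_inv_cancel₀ (hone k)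
  -- entries of P
  have hPij : ∀ i j, P i j = Θ (g i) (g j) := by
    intro i j
    simp [hP, Matrix.mul_apply, Matrix.transpose_apply, hX, ite_mul, mul_ite,
      one_mul, zero_mul, mul_zero, Finset.sum_ite_eq]
  have hEA : ∀ i j, ∫ ω, A ω i j ∂μ =
      Θ (g i) (g j) - (if i = j then Θ (g i) (g i) else 0) := by
    intro i j
    rw [hmean]
    by_cases h : i = j
    · subst h
      simp [Matrix.sub_apply, Matrix.diagonal_apply_eq, Matrix.diag_apply, hPij]
    · simp [Matrix.sub_apply, Matrix.diagonal_apply_ne _ h, hPij, h]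
  -- entrywise formula for Shat
  have hSentry : ∀ ω k l, Shat ω k l =
      ∑ i, ∑ j, ((s k)⁻¹ * (s l)⁻¹ * (X i k * X j l)) * A ω i j := by
    intro ω k l
    rw [hShat, hD]
    rw [show Matrix.diagonal (fun k => (s k)⁻¹) * Xᵀ * A ω * X *
        Matrix.diagonal (fun k => (s k)⁻¹) =
        Matrix.diagonal (fun k => (s k)⁻¹) * (Xᵀ * A ω * X) *
        Matrix.diagonal (fun k => (s k)⁻¹) by simp only [Matrix.mul_assoc]]
    rw [Matrix.mul_diagonal, Matrix.diagonal_mul]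
    simp only [Matrix.mul_apply, Matrix.transpose_apply, Finset.sum_mul, Finset.mul_sum]
    rw [Finset.sum_comm]
    refine Finset.sum_congr rfl fun i _ => Finset.sum_congr rfl fun j _ => by ring
  -- sums over clusters
  have lem : ∀ (k' : Fin K) (f : Fin n → ℝ),
      (∑ i, X i k' * f i) = ∑ i ∈ Finset.univ.filter (fun i => g i = k'), f i := by
    intro k' f
    rw [Finset.sum_filter]
    exact Finset.sum_congr rfl fun i _ => by by_cases h : g i = k' <;> simp [hX, h]
  -- integral of Shat entries
  have hES : ∀ k l, ∫ ω, Shat ω k l ∂μ =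
      Θ k l - (if k = l then (s k)⁻¹ * Θ k k else 0) := by
    intro k l
    have hint2 : ∀ i j : Fin n,
        Integrable (fun ω => ((s k)⁻¹ * (s l)⁻¹ * (X i k * X j l)) * A ω i j) μ :=
      fun i j => (hInt i j).const_mul _
    have hcard : ∀ k' : Fin K,
        ((Finset.univ.filter (fun i => g i = k')).card : ℝ) = s k' := fun k' => (hs k').symm
    calc ∫ ω, Shat ω k l ∂μ
        = ∫ ω, ∑ i, ∑ j, ((s k)⁻¹ * (s l)⁻¹ * (X i k * X j l)) * A ω i j ∂μ := by
          simp_rw [hSentry]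
      _ = ∑ i, ∑ j, ∫ ω, ((s k)⁻¹ * (s l)⁻¹ * (X i k * X j l)) * A ω i j ∂μ := by
          rw [integral_finset_sum _ (fun i _ => integrable_finset_sum _ (fun j _ => hint2 i j))]
          exact Finset.sum_congr rfl fun i _ =>
            integral_finset_sum _ (fun j _ => hint2 i j)
      _ = ∑ i, ∑ j, ((s k)⁻¹ * (s l)⁻¹ * (X i k * X j l)) *
            (Θ (g i) (g j) - (if i = j then Θ (g i) (g i) else 0)) := by
          refine Finset.sum_congr rfl fun i _ => Finset.sum_congr rfl fun j _ => ?_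
          rw [integral_const_mul, hEA]
      _ = ∑ i, X i k * ∑ j, X j l * ((s k)⁻¹ * (s l)⁻¹ *
            (Θ (g i) (g j) - (if i = j then Θ (g i) (g i) else 0))) := by
          refine Finset.sum_congr rfl fun i _ => ?_
          rw [Finset.mul_sum]
          exact Finset.sum_congr rfl fun j _ => by ring
      _ = ∑ i ∈ Finset.univ.filter (fun i => g i = k),
            ∑ j ∈ Finset.univ.filter (fun j => g j = l), ((s k)⁻¹ * (s l)⁻¹ *
            (Θ (g i) (g j) - (if i = j then Θ (g i) (g i) else 0))) := by
          rw [lem k]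
          exact Finset.sum_congr rfl fun i _ => lem l _
      _ = Θ k l - (if k = l then (s k)⁻¹ * Θ k k else 0) := by
          by_cases hkl : k = l
          · subst hkl
            rw [if_pos rfl]
            have inner : ∀ i ∈ Finset.univ.filter (fun i => g i = k),
                (∑ j ∈ Finset.univ.filter (fun j => g j = k), ((s k)⁻¹ * (s k)⁻¹ *
                  (Θ (g i) (g j) - (if i = j then Θ (g i) (g i) else 0))))
                = s k * ((s k)⁻¹ * (s k)⁻¹ * Θ k k) - (s k)⁻¹ * (s k)⁻¹ * Θ k k := by
              intro i hi
              have hgi : g i = k := (Finset.mem_filter.mp hi).2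
              have : ∀ j ∈ Finset.univ.filter (fun j => g j = k),
                  ((s k)⁻¹ * (s k)⁻¹ * (Θ (g i) (g j) - (if i = j then Θ (g i) (g i) else 0)))
                  = (s k)⁻¹ * (s k)⁻¹ * Θ k k - (if i = j then (s k)⁻¹ * (s k)⁻¹ * Θ k k else 0) := by
                intro j hj
                have hgj : g j = k := (Finset.mem_filter.mp hj).2
                by_cases h : i = j <;> simp [h, hgi, hgj]
              rw [Finset.sum_congr rfl this, Finset.sum_sub_distrib, Finset.sum_const,
                nsmul_eq_mul, hcard, Finset.sum_ite_eq, if_pos hi]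
            rw [Finset.sum_congr rfl inner, Finset.sum_const, nsmul_eq_mul, hcard]
            have h0 := hsne k
            field_simp
          · rw [if_neg hkl]
            have inner : ∀ i ∈ Finset.univ.filter (fun i => g i = k),
                (∑ j ∈ Finset.univ.filter (fun j => g j = l), ((s k)⁻¹ * (s l)⁻¹ *
                  (Θ (g i) (g j) - (if i = j then Θ (g i) (g i) else 0))))
                = s l * ((s k)⁻¹ * (s l)⁻¹ * Θ k l) := by
              intro i hi
              have hgi : g i = k := (Finset.mem_filter.mp hi).2
              have : ∀ j ∈ Finset.univ.filter (fun j => g j = l),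
                  ((s k)⁻¹ * (s l)⁻¹ * (Θ (g i) (g j) - (if i = j then Θ (g i) (g i) else 0)))
                  = (s k)⁻¹ * (s l)⁻¹ * Θ k l := by
                intro j hj
                have hgj : g j = l := (Finset.mem_filter.mp hj).2
                have hij : i ≠ j := fun h => hkl (hgi ▸ hgj ▸ (h ▸ rfl : g i = g j))
                simp [hij, hgi, hgj]
              rw [Finset.sum_congr rfl this, Finset.sum_const, nsmul_eq_mul, hcard]
            rw [Finset.sum_congr rfl inner, Finset.sum_const, nsmul_eq_mul, hcard]
            have h0 := hsne k
            have h1 := hsne l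
            field_simp
            ring
  -- entrywise formula for Θhat and conclusion
  intro k l
  have hTentry : ∀ ω, Θhat ω k l = Shat ω k l +
      (if k = l then (s k)⁻¹ * ((1:ℝ) - (s k)⁻¹)⁻¹ * Shat ω k k else 0) := by
    intro ω
    rw [hΘhat, hE, hD, Matrix.diagonal_mul_diagonal, Matrix.diagonal_mul_diagonal,
      Matrix.add_apply, Matrix.diagonal_apply]
    by_cases h : k = l <;> simp [h, Matrix.diag_apply, mul_assoc]
  have hintS : ∀ k' l', Integrable (fun ω => Shat ω k' l') μ := by
    intro k' l'
    have := fun (i j : Fin n) =>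
      ((hInt i j).const_mul ((s k')⁻¹ * (s l')⁻¹ * (X i k' * X j l')))
    simpa [hSentry] using
      integrable_finset_sum (μ := μ) Finset.univ
        (fun i _ => integrable_finset_sum Finset.univ (fun j _ => this i j))
  by_cases h : k = l
  · subst h
    have hI : ∫ ω, Θhat ω k k ∂μ =
        (∫ ω, Shat ω k k ∂μ) + (s k)⁻¹ * ((1:ℝ) - (s k)⁻¹)⁻¹ * ∫ ω, Shat ω k k ∂μ := by
      simp_rw [hTentry, if_true]
      rw [integral_add (hintS k k) ((hintS k k).const_mul _), integral_const_mul]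
    rw [hI, hES k k, if_pos rfl]
    have h1 := hone k
    have e : Θ k k - (s k)⁻¹ * Θ k k = (1 - (s k)⁻¹) * Θ k k := by ring
    rw [e, show (s k)⁻¹ * (1 - (s k)⁻¹)⁻¹ * ((1 - (s k)⁻¹) * Θ k k)
        = (s k)⁻¹ * ((1 - (s k)⁻¹)⁻¹ * (1 - (s k)⁻¹)) * Θ k k by ring,
      inv_mul_cancel₀ h1]
    ring
  · have hI : ∫ ω, Θhat ω k l ∂μ = ∫ ω, Shat ω k l ∂μ := by
      simp_rw [hTentry, if_neg h, add_zero]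
    rw [hI, hES k l, if_neg h, sub_zero]
end
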